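/- arXiv:2407.09170 — 2 statements merged into one kernel-verified Lean document; each statement's English description precedes it below -/
import Mathlib

section
/- Under the subextremality condition 0 < 3m < 1/√Λ, the cubic polynomial p(r) = Λr³/3 - r + 2m has exactly two positive roots, and hence there is a largest positive root r_C of Λr²/3 - 1 + 2m/r. -/
/-- **Existence of the cosmological horizon radius.** Under the subextremality
condition `0 < 3m < 1/√Λ`, the cubic `p(r) = Λr³/3 - r + 2m` has exactly two
positive roots, and hence there is a largest positive root `r_C` of
`Λr²/3 - 1 + 2m/r`. -/
theorem stmt_1 (Λ m : ℝ) (hΛ : 0 < Λ) (hm : 0 < m)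
    (hsub : 3 * m * Real.sqrt Λ < 1) :
    (∃ a b : ℝ, 0 < a ∧ a < b ∧
      Λ * a ^ 3 / 3 - a + 2 * m = 0 ∧ Λ * b ^ 3 / 3 - b + 2 * m = 0 ∧
      (∀ r : ℝ, 0 < r → Λ * r ^ 3 / 3 - r + 2 * m = 0 → r = a ∨ r = b)) ∧
    ∃ rC : ℝ, 0 < rC ∧ Λ * rC ^ 2 / 3 - 1 + 2 * m / rC = 0 ∧
      ∀ r : ℝ, 0 < r → Λ * r ^ 2 / 3 - 1 + 2 * m / r = 0 → r ≤ rC := by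
  set s := Real.sqrt Λ with hs_def
  have hs : 0 < s := Real.sqrt_pos.mpr hΛ
  have hs2 : s ^ 2 = Λ := Real.sq_sqrt hΛ.le
  set f : ℝ → ℝ := fun r => Λ * r ^ 3 / 3 - r + 2 * m with hf
  have hcont : Continuous f := by fun_prop
  have hf0 : f 0 = 2 * m := by simp [hf]
  have hfr0 : f (1 / s) < 0 := by
    have h1 : f (1 / s) = 2 * m - 2 / (3 * s) := by
      simp only [hf]
      field_simp
      nlinarith [hs2, hs]
    rw [h1]
    rw [sub_neg, lt_div_iff₀ (by positivity)]
    nlinarith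
  have hfR : 0 < f (2 / s) := by
    have h1 : f (2 / s) = 2 * m + 2 / (3 * s) := by
      simp only [hf]
      field_simp
      nlinarith [hs2, hs]
    rw [h1]; positivity
  -- root a in (0, 1/s)
  have h01 : (0:ℝ) ≤ 1 / s := by positivity
  obtain ⟨a, haI, ha0⟩ := intermediate_value_Icc' h01 hcont.continuousOn
    (Set.mem_Icc.mpr ⟨hfr0.le, by rw [hf0]; positivity⟩)
  have hapos : 0 < a := by
    rcases lt_or_eq_of_le haI.1 with h | h
    · exact h
    · exfalso; rw [← h] at ha0; rw [hf0] at ha0; nlinarith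
  have haltr0 : a < 1 / s := by
    rcases lt_or_eq_of_le haI.2 with h | h
    · exact h
    · exfalso; rw [h] at ha0; rw [ha0] at hfr0; exact lt_irrefl _ hfr0
  -- root b in (1/s, 2/s)
  have h12 : (1:ℝ) / s ≤ 2 / s := by
    rw [div_le_div_iff₀ hs hs]; nlinarith
  obtain ⟨b, hbI, hb0⟩ := intermediate_value_Icc h12 hcont.continuousOn
    (Set.mem_Icc.mpr ⟨hfr0.le, hfR.le⟩)
  have hbgtr0 : 1 / s < b := by
    rcases lt_or_eq_of_le hbI.1 with h | h
    · exact h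
    · exfalso; rw [← h] at hb0; rw [hb0] at hfr0; exact lt_irrefl _ hfr0
  have hbpos : 0 < b := lt_trans (by positivity) hbgtr0
  have hab : a < b := lt_trans haltr0 hbgtr0
  have hane : a ≠ b := ne_of_lt hab
  have ea : Λ * a ^ 3 / 3 - a + 2 * m = 0 := ha0
  have eb : Λ * b ^ 3 / 3 - b + 2 * m = 0 := hb0
  -- key algebraic identities
  have h1 : Λ * (a ^ 2 + a * b + b ^ 2) = 3 := by
    have hsub' : a - b ≠ 0 := sub_ne_zero.mpr hane
    have key : (Λ * (a ^ 2 + a * b + b ^ 2) - 3) * (a - b) = 0 := by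
      linear_combination 3 * ea - 3 * eb
    rcases mul_eq_zero.mp key with h | h
    · linarith [sub_eq_zero.mp (by linarith [h] : Λ * (a ^ 2 + a * b + b ^ 2) - 3 = 0)]
    · exact absurd h hsub'
  have h2 : Λ * a * b * (a + b) = 6 * m := by
    linear_combination a * h1 - 3 * ea
  have huniq : ∀ r : ℝ, 0 < r → Λ * r ^ 3 / 3 - r + 2 * m = 0 → r = a ∨ r = b := by
    intro r hr hr0
    have hfact : Λ * ((r - a) * (r - b) * (r + a + b)) = 0 := by
      linear_combination 3 * hr0 - r * h1 + h2
    have hprod : (r - a) * (r - b) * (r + a + b) = 0 :=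
      (mul_eq_zero.mp hfact).resolve_left (ne_of_gt hΛ)
    have hsum : r + a + b ≠ 0 := by positivity
    have : (r - a) * (r - b) = 0 := (mul_eq_zero.mp hprod).resolve_right hsum
    rcases mul_eq_zero.mp this with h | h
    · left; linarith [sub_eq_zero.mp h]
    · right; linarith [sub_eq_zero.mp h]
  refine ⟨⟨a, b, hapos, hab, ea, eb, huniq⟩, b, hbpos, ?_, ?_⟩
  · field_simp
    linear_combination 3 * eb
  · intro r hr hreq
    have hr3 : Λ * r ^ 3 / 3 - r + 2 * m = 0 := by
      have hrne : r ≠ 0 := ne_of_gt hr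
      field_simp at hreq
      field_simp
      linear_combination hreq
    rcases huniq r hr hr3 with h | h
    · linarith
    · linarith
end

section
/- In the finite-order expansion ψ = ψ₀ + ψ₁/r + ψ₂/r² + (log r)ψ_{3,1}/r³ + ψ₃/r³ with each coefficient r-independent, requiring that □_g ψ = O(r⁻⁴ log r) as r → ∞ (where □_g is the Schwarzschild-de Sitter wave operator) forces the recurrence relations ψ₁ = 0, ψ_{3,1} = 0, and ψ₂ = -(3/(2Λ)) Δ̃ψ₀, where Δ̃ = (3/Λ)∂_t² + Δ_{S²} is the Laplacian of the conformal boundary metric. -/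
noncomputable section

/-- The unit sphere `S² ⊂ ℝ³`. -/
abbrev S2 : Type := Metric.sphere (0 : EuclideanSpace ℝ (Fin 3)) 1

/-!
Substituting the expansion into the wave operator and expanding in `1/r`, using
`φ² = 3/(Λr²) + O(r⁻⁴)`, gives
`□_g ψ = (2Λ/3) ψ₁ / r + ((3/Λ) ∂_t²ψ₀ + Δ_{S²}ψ₀ + (2Λ/3) ψ₂) / r²
  + ((3/Λ) ∂_t²ψ₁ + Δ_{S²}ψ₁ + Λ ψ_{3,1}) / r³ + O(r⁻⁴ log r)`.
Since `r⁻⁴ log r = o(r⁻³)`, the hypothesis forces the three coefficients to vanish: the first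
gives `ψ₁ = 0`, after which the third gives `ψ_{3,1} = 0`, and the second is the relation for `ψ₂`.
-/

open Filter Topology Asymptotics Real

theorem tendsto_const_div_pow_atTop (c : ℝ) {k : ℕ} (hk : k ≠ 0) :
    Tendsto (fun r : ℝ => c / r ^ k) atTop (𝓝 0) :=
  tendsto_const_nhds.div_atTop (tendsto_pow_atTop hk)

theorem tendsto_log_div_self_atTop : Tendsto (fun r => log r / r) atTop (𝓝 0) :=
  isLittleO_log_id_atTop.tendsto_div_nhds_zero

theorem isBigO_log_div_pow_four_of_eq {f u v : ℝ → ℝ} {a b : ℝ}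
    (hu : Tendsto u atTop (𝓝 a)) (hv : Tendsto v atTop (𝓝 b))
    (hf : ∀ᶠ r in atTop, f r = (u r + v r * log r) / r ^ 4) :
    f =O[atTop] fun r => log r / r ^ 4 := by
  have hu_log : u =O[atTop] log :=
    (hu.isBigO_one ℝ).trans isLittleO_const_log_atTop.isBigO
  have hv_log : (fun r => v r * log r) =O[atTop] log := by
    simpa using (hv.isBigO_one ℝ).mul (isBigO_refl log atTop)
  refine ((hu_log.add hv_log).mul (isBigO_refl (fun r : ℝ => (r ^ 4)⁻¹) atTop)).congr' ?_ ?_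
  · filter_upwards [hf] with r hr
    rw [hr, div_eq_mul_inv]
  · exact .of_forall fun r => (div_eq_mul_inv _ _).symm

theorem eq_zero_of_isBigO_log_div_pow_four {α β γ : ℝ}
    (h : (fun r : ℝ => α / r + β / r ^ 2 + γ / r ^ 3) =O[atTop] fun r => log r / r ^ 4) :
    α = 0 ∧ β = 0 ∧ γ = 0 := by
  have hlog : (fun r => log r / r ^ 4) =o[atTop] fun r : ℝ => (r ^ 3)⁻¹ :=
    ((((isLittleO_one_iff ℝ).2 tendsto_log_div_self_atTop).mul_isBigO
      (isBigO_refl (fun r : ℝ => (r ^ 3)⁻¹) atTop)).congr_left fun r => by ring).congr_right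
      fun r => one_mul _
  open Polynomial in
  have hP : Tendsto (fun r => (C α * X ^ 2 + C β * X + C γ).eval r) atTop (𝓝 0) := by
    refine ((h.trans_isLittleO hlog).tendsto_div_nhds_zero).congr' ?_
    filter_upwards [eventually_ne_atTop 0] with r hr
    simp only [eval_add, eval_mul, eval_C, eval_pow, eval_X]
    field_simp
  obtain ⟨hlead, -⟩ := (Polynomial.tendsto_nhds_iff _).1 hP
  have hzero := Polynomial.leadingCoeff_eq_zero.1 hlead
  refine ⟨?_, ?_, ?_⟩
  · simpa using congr_arg (Polynomial.coeff · 2) hzero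
  · simpa using congr_arg (Polynomial.coeff · 1) hzero
  · simpa using congr_arg (Polynomial.coeff · 0) hzero

namespace SchwarzschildDeSitter

def phiInvSq (Λ m r : ℝ) : ℝ := Λ * r ^ 2 / 3 - 1 + 2 * m / r

def expansion (c0 c1 c2 c31 c3 r : ℝ) : ℝ :=
  c0 + c1 / r + c2 / r ^ 2 + log r * c31 / r ^ 3 + c3 / r ^ 3

theorem tendsto_expansion (c0 c1 c2 c31 c3 : ℝ) :
    Tendsto (expansion c0 c1 c2 c31 c3) atTop (𝓝 c0) := by
  have hlog : Tendsto (fun r => log r * c31 / r ^ 3) atTop (𝓝 0) := by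
    refine ((tendsto_log_div_self_atTop.mul_const c31).div_atTop
      (tendsto_pow_atTop two_ne_zero)).congr' ?_
    filter_upwards [eventually_ne_atTop 0] with r hr
    field_simp
  unfold expansion
  simpa using ((((tendsto_const_nhds (x := c0)).add
    (tendsto_const_div_pow_atTop c1 one_ne_zero)).add
    (tendsto_const_div_pow_atTop c2 two_ne_zero)).add hlog).add
    (tendsto_const_div_pow_atTop c3 three_ne_zero)

theorem tendsto_phiInvSq_div_sq (Λ m : ℝ) :
    Tendsto (fun r => phiInvSq Λ m r / r ^ 2) atTop (𝓝 (Λ / 3)) := by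
  have h := ((tendsto_const_nhds (x := Λ / 3)).sub
    (tendsto_const_div_pow_atTop 1 two_ne_zero)).add
    (tendsto_const_div_pow_atTop (2 * m) three_ne_zero)
  rw [sub_zero, add_zero] at h
  refine h.congr' ?_
  filter_upwards [eventually_ne_atTop 0] with r hr
  simp only [phiInvSq]
  field_simp

theorem tendsto_sq_div_phiInvSq {Λ : ℝ} (hΛ : Λ ≠ 0) (m : ℝ) :
    Tendsto (fun r => r ^ 2 / phiInvSq Λ m r) atTop (𝓝 (3 / Λ)) := by
  simpa using (tendsto_phiInvSq_div_sq Λ m).inv₀ (div_ne_zero hΛ three_ne_zero)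

theorem eventually_phiInvSq_ne_zero {Λ : ℝ} (hΛ : Λ ≠ 0) (m : ℝ) :
    ∀ᶠ r in atTop, phiInvSq Λ m r ≠ 0 := by
  filter_upwards [(tendsto_phiInvSq_div_sq Λ m).eventually_ne (div_ne_zero hΛ three_ne_zero)]
    with r hr hQ
  rw [hQ, zero_div] at hr
  exact hr rfl

theorem hasDerivAt_expansion (c0 c1 c2 c31 c3 : ℝ) {r : ℝ} (hr : r ≠ 0) :
    HasDerivAt (expansion c0 c1 c2 c31 c3)
      ((-c1 * r ^ 2 - 2 * c2 * r + (c31 - 3 * c3) - 3 * c31 * log r) / r ^ 4) r := by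
  have hpow (k : ℕ) : (fun s : ℝ => s ^ k) r ≠ 0 := pow_ne_zero k hr
  have h : HasDerivAt
      (fun s => c0 + c1 / s + c2 / s ^ 2 + log s * c31 / s ^ 3 + c3 / s ^ 3) _ r :=
    ((((hasDerivAt_const r c0).add ((hasDerivAt_const r c1).div (hasDerivAt_id' r) hr)).add
      ((hasDerivAt_const r c2).div (hasDerivAt_pow 2 r) (hpow 2))).add
      (((hasDerivAt_log hr).mul_const c31).div (hasDerivAt_pow 3 r) (hpow 3))).add
      ((hasDerivAt_const r c3).div (hasDerivAt_pow 3 r) (hpow 3))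
  refine h.congr_deriv ?_
  field_simp
  ring

section Coefficients

variable {f0 f1 f2 f31 f3 : ℝ → ℝ}

theorem hasDerivAt_expansion_of_coeffs {f0' f1' f2' f31' f3' t : ℝ} (r : ℝ)
    (h0 : HasDerivAt f0 f0' t) (h1 : HasDerivAt f1 f1' t) (h2 : HasDerivAt f2 f2' t)
    (h31 : HasDerivAt f31 f31' t) (h3 : HasDerivAt f3 f3' t) :
    HasDerivAt (fun s => expansion (f0 s) (f1 s) (f2 s) (f31 s) (f3 s) r)
      (expansion f0' f1' f2' f31' f3' r) t :=
  (((h0.add (h1.div_const r)).add (h2.div_const _)).add ((h31.const_mul _).div_const _)).add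
    (h3.div_const _)

theorem deriv_deriv_expansion_of_coeffs (h0 : ContDiff ℝ 2 f0) (h1 : ContDiff ℝ 2 f1)
    (h2 : ContDiff ℝ 2 f2) (h31 : ContDiff ℝ 2 f31) (h3 : ContDiff ℝ 2 f3) (r t : ℝ) :
    deriv (deriv fun s => expansion (f0 s) (f1 s) (f2 s) (f31 s) (f3 s) r) t =
      expansion (deriv (deriv f0) t) (deriv (deriv f1) t) (deriv (deriv f2) t)
        (deriv (deriv f31) t) (deriv (deriv f3) t) r := by
  have hd {f : ℝ → ℝ} (hf : ContDiff ℝ 2 f) (s : ℝ) : HasDerivAt f (deriv f s) s :=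
    (hf.differentiable two_ne_zero s).hasDerivAt
  have hdd {f : ℝ → ℝ} (hf : ContDiff ℝ 2 f) (s : ℝ) :
      HasDerivAt (deriv f) (deriv (deriv f) s) s :=
    ((ContDiff.deriv' (n := 1) hf).differentiable one_ne_zero s).hasDerivAt
  have hfirst : (deriv fun s => expansion (f0 s) (f1 s) (f2 s) (f31 s) (f3 s) r) =
      fun s => expansion (deriv f0 s) (deriv f1 s) (deriv f2 s) (deriv f31 s) (deriv f3 s) r :=
    funext fun s =>
      (hasDerivAt_expansion_of_coeffs r (hd h0 s) (hd h1 s) (hd h2 s) (hd h31 s) (hd h3 s)).deriv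
  rw [hfirst]
  exact (hasDerivAt_expansion_of_coeffs r (hdd h0 t) (hdd h1 t) (hdd h2 t) (hdd h31 t)
    (hdd h3 t)).deriv

end Coefficients

theorem map_expansion_apply {α β : Type*} (L : (α → β → ℝ) →ₗ[ℝ] (α → β → ℝ))
    (f0 f1 f2 f31 f3 : α → β → ℝ) (r : ℝ) (a : α) (b : β) :
    L (fun a b => expansion (f0 a b) (f1 a b) (f2 a b) (f31 a b) (f3 a b) r) a b =
      expansion (L f0 a b) (L f1 a b) (L f2 a b) (L f31 a b) (L f3 a b) r := by
  have h : (fun a b => expansion (f0 a b) (f1 a b) (f2 a b) (f31 a b) (f3 a b) r) =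
      f0 + (1 / r) • f1 + (1 / r ^ 2) • f2 + (log r / r ^ 3) • f31 + (1 / r ^ 3) • f3 := by
    funext a b
    simp only [expansion, Pi.add_apply, Pi.smul_apply, smul_eq_mul]
    ring
  rw [h]
  simp only [map_add, map_smul, Pi.add_apply, Pi.smul_apply, smul_eq_mul, expansion]
  ring

theorem hasDerivAt_flux (Λ m c0 c1 c2 c31 c3 : ℝ) {r : ℝ} (hr : r ≠ 0) :
    HasDerivAt (fun s => s ^ 2 * phiInvSq Λ m s * deriv (expansion c0 c1 c2 c31 c3) s)
      ((2 / r ^ 3 - 6 * m / r ^ 4) *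
          (-c1 * r ^ 2 - 2 * c2 * r + (c31 - 3 * c3) - 3 * c31 * log r) +
        (Λ / 3 - 1 / r ^ 2 + 2 * m / r ^ 3) * (-2 * c1 * r - 2 * c2 - 3 * c31 / r)) r := by
  have hpow (k : ℕ) : (fun s : ℝ => s ^ k) r ≠ 0 := pow_ne_zero k hr
  have hP : HasDerivAt (fun s => Λ / 3 - 1 / s ^ 2 + 2 * m / s ^ 3)
      (2 / r ^ 3 - 6 * m / r ^ 4) r := by
    refine (((hasDerivAt_const r _).sub ((hasDerivAt_const r 1).div (hasDerivAt_pow 2 r)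
      (hpow 2))).add ((hasDerivAt_const r _).div (hasDerivAt_pow 3 r) (hpow 3))).congr_deriv ?_
    field_simp
    ring
  have hN : HasDerivAt (fun s => -c1 * s ^ 2 - 2 * c2 * s + (c31 - 3 * c3) - 3 * c31 * log s)
      (-2 * c1 * r - 2 * c2 - 3 * c31 / r) r := by
    refine (((((hasDerivAt_pow 2 r).const_mul (-c1)).sub
      ((hasDerivAt_id' r).const_mul _)).add_const _).sub
      ((hasDerivAt_log hr).const_mul _)).congr_deriv ?_
    field_simp
    ring
  have hPN : HasDerivAt (fun s => (Λ / 3 - 1 / s ^ 2 + 2 * m / s ^ 3) *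
      (-c1 * s ^ 2 - 2 * c2 * s + (c31 - 3 * c3) - 3 * c31 * log s)) _ r := hP.mul hN
  refine hPN.congr_of_eventuallyEq ?_
  filter_upwards [isOpen_ne.mem_nhds hr] with s hs
  rw [(hasDerivAt_expansion c0 c1 c2 c31 c3 hs).deriv]
  simp only [phiInvSq]
  field_simp

theorem isBigO_inv_phiInvSq_mul_expansion_sub {Λ : ℝ} (hΛ : Λ ≠ 0) (m a0 a1 a2 a31 a3 : ℝ) :
    (fun r => (phiInvSq Λ m r)⁻¹ * expansion a0 a1 a2 a31 a3 r -
        (3 / Λ * a0 / r ^ 2 + 3 / Λ * a1 / r ^ 3)) =O[atTop] fun r => log r / r ^ 4 := by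
  -- `u` collects `r⁴ (φ² - 3/(Λr²)) = (3 - 6m/r) r² φ² / Λ` times the bounded expansion.
  refine isBigO_log_div_pow_four_of_eq
    (u := fun r => (3 - 6 * m / r) * (r ^ 2 / phiInvSq Λ m r) / Λ *
      expansion a0 a1 a2 a31 a3 r + 3 / Λ * (a2 + a3 / r))
    (v := fun r => 3 / Λ * a31 / r)
    (((((tendsto_const_nhds.sub (tendsto_const_nhds.div_atTop tendsto_id)).mul
      (tendsto_sq_div_phiInvSq hΛ m)).div_const Λ).mul (tendsto_expansion _ _ _ _ _)).add
      ((tendsto_const_nhds.add (tendsto_const_nhds.div_atTop tendsto_id)).const_mul _))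
    (tendsto_const_nhds.div_atTop tendsto_id) ?_
  filter_upwards [eventually_ne_atTop 0, eventually_phiInvSq_ne_zero hΛ m] with r hr hQ
  have hQr : phiInvSq Λ m r * (3 * r) = Λ * r ^ 3 - 3 * r + 6 * m := by
    unfold phiInvSq
    field_simp
    ring
  simp only [expansion]
  field_simp
  linear_combination -(r * (r * (a0 * r + a1) + a2) + log r * a31 + a3) * hQr

theorem isBigO_radial_add (Λ m c0 c1 c2 c31 c3 : ℝ) :
    (fun r => 1 / r ^ 2 * deriv (fun s => s ^ 2 * phiInvSq Λ m s *
        deriv (expansion c0 c1 c2 c31 c3) s) r +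
      (2 * Λ / 3 * c1 / r + 2 * Λ / 3 * c2 / r ^ 2 + Λ * c31 / r ^ 3))
      =O[atTop] fun r => log r / r ^ 4 := by
  refine isBigO_log_div_pow_four_of_eq
    (u := fun r => (2 * m * c1 - 2 * c2) +
      ((5 * c31 - 6 * c3 + 8 * m * c2) - 6 * m * (2 * c31 - 3 * c3) / r) / r)
    (v := fun r => (-6 * c31 + 18 * m * c31 / r) / r)
    (tendsto_const_nhds.add
      ((tendsto_const_nhds.sub (tendsto_const_nhds.div_atTop tendsto_id)).div_atTop tendsto_id))
    ((tendsto_const_nhds.add (tendsto_const_nhds.div_atTop tendsto_id)).div_atTop tendsto_id) ?_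
  filter_upwards [eventually_ne_atTop 0] with r hr
  rw [(hasDerivAt_flux Λ m c0 c1 c2 c31 c3 hr).deriv]
  field_simp
  ring

theorem isBigO_inv_sq_mul_expansion_sub (b0 b1 b2 b31 b3 : ℝ) :
    (fun r => 1 / r ^ 2 * expansion b0 b1 b2 b31 b3 r - (b0 / r ^ 2 + b1 / r ^ 3))
      =O[atTop] fun r => log r / r ^ 4 := by
  refine isBigO_log_div_pow_four_of_eq (u := fun r => b2 + b3 / r) (v := fun r => b31 / r)
    (tendsto_const_nhds.add (tendsto_const_nhds.div_atTop tendsto_id))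
    (tendsto_const_nhds.div_atTop tendsto_id) ?_
  filter_upwards [eventually_ne_atTop 0] with r hr
  simp only [expansion]
  field_simp
  ring

theorem isBigO_wave_sub_leading {Λ : ℝ} (hΛ : Λ ≠ 0)
    (m a0 a1 a2 a31 a3 b0 b1 b2 b31 b3 c0 c1 c2 c31 c3 : ℝ) :
    (fun r => (phiInvSq Λ m r)⁻¹ * expansion a0 a1 a2 a31 a3 r -
        1 / r ^ 2 * deriv (fun s => s ^ 2 * phiInvSq Λ m s *
          deriv (expansion c0 c1 c2 c31 c3) s) r +
        1 / r ^ 2 * expansion b0 b1 b2 b31 b3 r -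
      (2 * Λ / 3 * c1 / r + (3 / Λ * a0 + b0 + 2 * Λ / 3 * c2) / r ^ 2 +
        (3 / Λ * a1 + b1 + Λ * c31) / r ^ 3)) =O[atTop] fun r => log r / r ^ 4 :=
  (((isBigO_inv_phiInvSq_mul_expansion_sub hΛ m a0 a1 a2 a31 a3).sub
    (isBigO_radial_add Λ m c0 c1 c2 c31 c3)).add
    (isBigO_inv_sq_mul_expansion_sub b0 b1 b2 b31 b3)).congr_left fun r => by ring

theorem wave_coeffs_eq_zero {Λ : ℝ} (hΛ : Λ ≠ 0)
    {m C r₁ a0 a1 a2 a31 a3 b0 b1 b2 b31 b3 c0 c1 c2 c31 c3 : ℝ}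
    (h : ∀ r ≥ r₁, |(phiInvSq Λ m r)⁻¹ * expansion a0 a1 a2 a31 a3 r -
        1 / r ^ 2 * deriv (fun s => s ^ 2 * phiInvSq Λ m s *
          deriv (expansion c0 c1 c2 c31 c3) s) r +
        1 / r ^ 2 * expansion b0 b1 b2 b31 b3 r| ≤ C * log r / r ^ 4) :
    2 * Λ / 3 * c1 = 0 ∧ 3 / Λ * a0 + b0 + 2 * Λ / 3 * c2 = 0 ∧
      3 / Λ * a1 + b1 + Λ * c31 = 0 := by
  have hbound : (fun r => (phiInvSq Λ m r)⁻¹ * expansion a0 a1 a2 a31 a3 r -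
        1 / r ^ 2 * deriv (fun s => s ^ 2 * phiInvSq Λ m s *
          deriv (expansion c0 c1 c2 c31 c3) s) r +
        1 / r ^ 2 * expansion b0 b1 b2 b31 b3 r) =O[atTop] fun r => log r / r ^ 4 := by
    refine .of_bound C ?_
    filter_upwards [eventually_ge_atTop r₁, eventually_ge_atTop 1] with r hr hr1
    rw [Real.norm_eq_abs, Real.norm_eq_abs,
      abs_of_nonneg (div_nonneg (log_nonneg hr1) (by positivity)), ← mul_div_assoc]
    exact h r hr
  exact eq_zero_of_isBigO_log_div_pow_four <|
    (hbound.sub (isBigO_wave_sub_leading hΛ m a0 a1 a2 a31 a3 b0 b1 b2 b31 b3 c0 c1 c2 c31 c3)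
      ).congr_left fun r => by ring

end SchwarzschildDeSitter

open SchwarzschildDeSitter

theorem stmt_6_general (Λ m : ℝ) (hΛ : 0 < Λ)
    (ΔS : (ℝ → S2 → ℝ) →ₗ[ℝ] (ℝ → S2 → ℝ))
    (ψ0 ψ1 ψ2 ψ31 ψ3 : ℝ → S2 → ℝ)
    (hreg : ∀ ω : S2, ContDiff ℝ 2 (fun t => ψ0 t ω) ∧
      ContDiff ℝ 2 (fun t => ψ1 t ω) ∧ ContDiff ℝ 2 (fun t => ψ2 t ω) ∧
      ContDiff ℝ 2 (fun t => ψ31 t ω) ∧ ContDiff ℝ 2 (fun t => ψ3 t ω))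
    (ψ : ℝ → ℝ → S2 → ℝ)
    (hψ : ∀ r t ω, ψ r t ω = ψ0 t ω + ψ1 t ω / r + ψ2 t ω / r ^ 2
        + Real.log r * ψ31 t ω / r ^ 3 + ψ3 t ω / r ^ 3)
    (hbound : ∃ C > (0 : ℝ), ∃ r₁ : ℝ, ∀ r ≥ r₁, ∀ (t : ℝ) (ω : S2),
      |(Λ * r ^ 2 / 3 - 1 + 2 * m / r)⁻¹ * deriv (deriv (fun s => ψ r s ω)) t
        - (1 / r ^ 2) * deriv (fun s : ℝ =>
            s ^ 2 * (Λ * s ^ 2 / 3 - 1 + 2 * m / s)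
              * deriv (fun u => ψ u t ω) s) r
        + (1 / r ^ 2) * ΔS (ψ r) t ω|
        ≤ C * Real.log r / r ^ 4) :
    ψ1 = 0 ∧ ψ31 = 0 ∧
      ∀ (t : ℝ) (ω : S2), ψ2 t ω = -(3 / (2 * Λ)) *
        ((3 / Λ) * deriv (deriv (fun s => ψ0 s ω)) t + ΔS ψ0 t ω) := by
  obtain ⟨C, -, r₁, hb⟩ := hbound
  obtain rfl : ψ = fun r t ω => expansion (ψ0 t ω) (ψ1 t ω) (ψ2 t ω) (ψ31 t ω) (ψ3 t ω) r := by
    funext r t ω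
    exact hψ r t ω
  have hcoeff (t : ℝ) (ω : S2) : 2 * Λ / 3 * ψ1 t ω = 0 ∧
      3 / Λ * deriv (deriv fun s => ψ0 s ω) t + ΔS ψ0 t ω + 2 * Λ / 3 * ψ2 t ω = 0 ∧
      3 / Λ * deriv (deriv fun s => ψ1 s ω) t + ΔS ψ1 t ω + Λ * ψ31 t ω = 0 := by
    obtain ⟨h0, h1, h2, h31, h3⟩ := hreg ω
    have hbtω := fun r hr => hb r hr t ω
    simp only [deriv_deriv_expansion_of_coeffs h0 h1 h2 h31 h3, map_expansion_apply] at hbtω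
    exact wave_coeffs_eq_zero hΛ.ne' hbtω
  have hψ1 : ψ1 = 0 := by
    funext t ω
    exact (mul_eq_zero.1 (hcoeff t ω).1).resolve_left (by positivity)
  refine ⟨hψ1, ?_, fun t ω => ?_⟩
  · funext t ω
    have h := (hcoeff t ω).2.2
    simp only [hψ1, Pi.zero_apply, deriv_const', map_zero, mul_zero, add_zero, zero_add] at h
    exact (mul_eq_zero.1 h).resolve_left hΛ.ne'
  · have h := (hcoeff t ω).2.1
    field_simp at h ⊢
    linarith

/-- **Recurrence relations for the asymptotic expansion.** In the finite-order
expansion `ψ = ψ₀ + ψ₁/r + ψ₂/r² + (log r)ψ_{3,1}/r³ + ψ₃/r³` with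
`r`-independent coefficients, the requirement `□_g ψ = O(r⁻⁴ log r)` as
`r → ∞` (with `□_g ψ = φ²∂_t²ψ - r⁻²∂_r(r²φ⁻²∂_rψ) + r⁻²Δ_{S²}ψ` the
Schwarzschild-de Sitter wave operator) forces `ψ₁ = 0`, `ψ_{3,1} = 0` and
`ψ₂ = -(3/(2Λ)) Δ̃ψ₀`, where `Δ̃ = (3/Λ)∂_t² + Δ_{S²}` is the Laplacian of the
conformal boundary metric.  The spherical Laplacian is modelled by a linear
operator `ΔS` on functions on the cylinder `ℝ×S²`. -/
theorem stmt_6 (Λ m : ℝ) (hΛ : 0 < Λ) (hm : 0 < m)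
    (hsub : 3 * m * Real.sqrt Λ < 1)
    (ΔS : (ℝ → S2 → ℝ) →ₗ[ℝ] (ℝ → S2 → ℝ))
    (ψ0 ψ1 ψ2 ψ31 ψ3 : ℝ → S2 → ℝ)
    (hreg : ∀ ω : S2, ContDiff ℝ 2 (fun t => ψ0 t ω) ∧
      ContDiff ℝ 2 (fun t => ψ1 t ω) ∧ ContDiff ℝ 2 (fun t => ψ2 t ω) ∧
      ContDiff ℝ 2 (fun t => ψ31 t ω) ∧ ContDiff ℝ 2 (fun t => ψ3 t ω))
    (ψ : ℝ → ℝ → S2 → ℝ)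
    (hψ : ∀ r t ω, ψ r t ω = ψ0 t ω + ψ1 t ω / r + ψ2 t ω / r ^ 2
        + Real.log r * ψ31 t ω / r ^ 3 + ψ3 t ω / r ^ 3)
    (hbound : ∃ C > (0 : ℝ), ∃ r₁ : ℝ, ∀ r ≥ r₁, ∀ (t : ℝ) (ω : S2),
      |(Λ * r ^ 2 / 3 - 1 + 2 * m / r)⁻¹ * deriv (deriv (fun s => ψ r s ω)) t
        - (1 / r ^ 2) * deriv (fun s : ℝ =>
            s ^ 2 * (Λ * s ^ 2 / 3 - 1 + 2 * m / s)
              * deriv (fun u => ψ u t ω) s) r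
        + (1 / r ^ 2) * ΔS (ψ r) t ω|
        ≤ C * Real.log r / r ^ 4) :
    ψ1 = 0 ∧ ψ31 = 0 ∧
      ∀ (t : ℝ) (ω : S2), ψ2 t ω = -(3 / (2 * Λ)) *
        ((3 / Λ) * deriv (deriv (fun s => ψ0 s ω)) t + ΔS ψ0 t ω) :=
  stmt_6_general Λ m hΛ ΔS ψ0 ψ1 ψ2 ψ31 ψ3 hreg ψ hψ hbound
end
end
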